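/- arXiv:1209.0935 — 4 statements merged into one kernel-verified Lean document; each statement's English description precedes it below -/
import Mathlib

section
/- Any L-simple single term formula L_1 L_2 … L_n α, where α is a propositional formula, L_i = ¬K_i¬ are possibility operators for distinct agents, is successful in S5: if M, w ⊨ L_1…L_n α then M|_{L_1…L_n α}, w ⊨ L_1…L_n α. -/
/-- Formulas of public announcement logic over agent type `A` and atoms `P`. -/
inductive Form (A P : Type) : Type where
  | atom : P → Form A P
  | neg  : Form A P → Form A P
  | and  : Form A P → Form A P → Form A P
  | or   : Form A P → Form A P → Form A P
  | K    : A → Form A P → Form A P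
  | ann  : Form A P → Form A P → Form A P

/-- The possibility operator `L_a φ := ¬ K_a ¬ φ`. -/
def Form.L {A P : Type} (a : A) (φ : Form A P) : Form A P := .neg (.K a (.neg φ))

/-- An S5 epistemic model: worlds, an equivalence relation per agent, a valuation. -/
structure Model (A P : Type) where
  W : Type
  R : A → W → W → Prop
  equiv : ∀ a, Equivalence (R a)
  V : P → W → Prop

/-- Restriction (submodel) of a model to the worlds satisfying `S`. -/
def Model.restrict {A P : Type} (M : Model A P) (S : M.W → Prop) : Model A P where
  W := {w : M.W // S w}
  R a u v := M.R a u.1 v.1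
  equiv a := ⟨fun _ => (M.equiv a).refl _, fun h => (M.equiv a).symm h,
              fun h h' => (M.equiv a).trans h h'⟩
  V p w := M.V p w.1

/-- Truth of a formula at a world of a model. -/
def sat {A P : Type} : (M : Model A P) → M.W → Form A P → Prop
  | M, w, .atom p => M.V p w
  | M, w, .neg φ => ¬ sat M w φ
  | M, w, .and φ ψ => sat M w φ ∧ sat M w ψ
  | M, w, .or φ ψ => sat M w φ ∨ sat M w ψ
  | M, w, .K a φ => ∀ v, M.R a w v → sat M v φ
  | M, w, .ann φ ψ => ∀ h : sat M w φ, sat (M.restrict (fun v => sat M v φ)) ⟨w, h⟩ ψ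

/-- A formula is successful iff it remains true after being announced. -/
def successful {A P : Type} (φ : Form A P) : Prop :=
  ∀ (M : Model A P) (w : M.W) (h : sat M w φ),
    sat (M.restrict (fun v => sat M v φ)) ⟨w, h⟩ φ

/-- Purely propositional formulas (no epistemic or announcement operators). -/
def Form.isProp {A P : Type} : Form A P → Prop
  | .atom _ => True
  | .neg φ => φ.isProp
  | .and φ ψ => φ.isProp ∧ ψ.isProp
  | .or φ ψ => φ.isProp ∧ ψ.isProp
  | .K _ _ => False
  | .ann _ _ => False

/-- Prefix a formula with a sequence of `K` operators. -/
def Kseq {A P : Type} (l : List A) (φ : Form A P) : Form A P := l.foldr .K φ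

/-- Prefix a formula with a sequence of `L` operators. -/
def Lseq {A P : Type} (l : List A) (φ : Form A P) : Form A P := l.foldr Form.L φ

/-- Prefix a formula with a sequence of epistemic operators:
`(a, true)` stands for `K_a` and `(a, false)` for `L_a`. -/
def Eseq {A P : Type} (l : List (A × Bool)) (φ : Form A P) : Form A P :=
  l.foldr (fun e ψ => if e.2 then .K e.1 ψ else Form.L e.1 ψ) φ

/-- Propositional formulas are invariant under restriction. -/
lemma prop_invariant {A P : Type} (M : Model A P) (S : M.W → Prop)
    (α : Form A P) (hα : α.isProp) (w : (M.restrict S).W) :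
    sat (M.restrict S) w α ↔ sat M w.1 α := by
  induction α with
  | atom p => exact Iff.rfl
  | neg φ ih => exact not_congr (ih hα)
  | and φ ψ ihφ ihψ => exact and_congr (ihφ hα.1) (ihψ hα.2)
  | or φ ψ ihφ ihψ => exact or_congr (ihφ hα.1) (ihψ hα.2)
  | K a φ ih => exact absurd hα not_false
  | ann φ ψ _ _ => exact absurd hα not_false

/-- Reflexivity: `φ → L_a φ`. -/
lemma sat_L_of_sat {A P : Type} (M : Model A P) (w : M.W) (a : A) (φ : Form A P)
    (h : sat M w φ) : sat M w (Form.L a φ) :=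
  fun hall => hall w ((M.equiv a).refl w) h

lemma Lseq_main {A P : Type} (M : Model A P) (S : M.W → Prop) (l : List A)
    (α : Form A P) (hα : α.isProp) :
    ∀ (w : M.W) (hw : S w), (∀ v, sat M v (Lseq l α) → S v) →
      sat M w (Lseq l α) → sat (M.restrict S) ⟨w, hw⟩ (Lseq l α) := by
  induction l with
  | nil =>
    intro w hw _ h
    exact (prop_invariant M S α hα ⟨w, hw⟩).mpr h
  | cons a l ih =>
    intro w hw hS h
    have h' : ∃ v, M.R a w v ∧ sat M v (Lseq l α) := by
      by_contra hc
      push_neg at hc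
      exact h fun v hv hsat => hc v hv hsat
    obtain ⟨v, hRv, hsatv⟩ := h'
    have hSv : S v := hS v (sat_L_of_sat M v a _ hsatv)
    have hrest := ih v hSv (fun u hu => hS u (sat_L_of_sat M u a _ hu)) hsatv
    exact fun hall => hall ⟨v, hSv⟩ hRv hrest

/-- L-simple single term formulas `L_1 … L_n α` (distinct agents, `α` propositional)
are successful. -/
theorem L_simple_single_term_successful {A P : Type} (l : List A) (hl : l.Nodup)
    (α : Form A P) (hα : α.isProp) : successful (Lseq l α) := by
  intro M w h
  exact Lseq_main M (fun v => sat M v (Lseq l α)) l α hα w h (fun _ hv => hv) h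
end

section
/- Every KL-simple single term formula — a formula of the form K_1 X L_2 Y α in which the epistemic operators correspond to pairwise distinct agents, where X is a (possibly empty) sequence of K operators and Y a (possibly empty) sequence of K and L operators, and α is a propositional atom — is unsuccessful in S5. -/
/-! Once every agent other than `a` and `b` is omniscient, the formula collapses to
`K_a L_b p`. In the three-world model `0 ~b~ 1 ~a~ 2` with `p` true only at `1`, `K_a L_b p`
holds only at `0`; announcing it deletes `1`, the only witness for `L_b p`. -/

namespace Model

variable {A P : Type}

def Omniscient (M : Model A P) (c : A) : Prop := ∀ u v : M.W, M.R c u v → u = v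

theorem Omniscient.restrict {M : Model A P} {c : A} (h : M.Omniscient c) (S : M.W → Prop) :
    (M.restrict S).Omniscient c :=
  fun u v huv => Subtype.ext (h u.1 v.1 huv)

end Model

section Semantics

variable {A P : Type} {M : Model A P}

theorem sat_K {c : A} {φ : Form A P} {w : M.W} :
    sat M w (.K c φ) ↔ ∀ v, M.R c w v → sat M v φ := Iff.rfl

theorem sat_L {c : A} {φ : Form A P} {w : M.W} :
    sat M w (Form.L c φ) ↔ ∃ v, M.R c w v ∧ sat M v φ := by
  simp [Form.L, sat]

theorem sat_of_sat_K {c : A} {φ : Form A P} {w : M.W} (h : sat M w (.K c φ)) : sat M w φ :=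
  h w ((M.equiv c).refl w)

theorem sat_K_iff_of_omniscient {c : A} (hc : M.Omniscient c) (φ : Form A P) (w : M.W) :
    sat M w (.K c φ) ↔ sat M w φ :=
  ⟨sat_of_sat_K, fun hw v hv => hc w v hv ▸ hw⟩

theorem sat_L_iff_of_omniscient {c : A} (hc : M.Omniscient c) (φ : Form A P) (w : M.W) :
    sat M w (Form.L c φ) ↔ sat M w φ := by
  rw [sat_L]
  exact ⟨fun ⟨v, hv, hφ⟩ => hc w v hv ▸ hφ, fun hw => ⟨w, (M.equiv c).refl w, hw⟩⟩

theorem sat_Kseq_iff_of_omniscient {l : List A} (hl : ∀ c ∈ l, M.Omniscient c)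
    (φ : Form A P) (w : M.W) : sat M w (Kseq l φ) ↔ sat M w φ := by
  induction l with
  | nil => rfl
  | cons c l ih =>
    rw [List.forall_mem_cons] at hl
    exact (sat_K_iff_of_omniscient hl.1 _ w).trans (ih hl.2)

theorem sat_Eseq_iff_of_omniscient {l : List (A × Bool)} (hl : ∀ e ∈ l, M.Omniscient e.1)
    (φ : Form A P) (w : M.W) : sat M w (Eseq l φ) ↔ sat M w φ := by
  induction l with
  | nil => rfl
  | cons e l ih =>
    rw [List.forall_mem_cons] at hl
    rcases e with ⟨c, _ | _⟩
    · exact (sat_L_iff_of_omniscient hl.1 _ w).trans (ih hl.2)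
    · exact (sat_K_iff_of_omniscient hl.1 _ w).trans (ih hl.2)

theorem not_sat_L_atom_restrict {S : M.W → Prop} {b : A} {p : P}
    (hS : ∀ v, S v → ¬ M.V p v) (w : (M.restrict S).W) :
    ¬ sat (M.restrict S) w (Form.L b (.atom p)) := by
  rw [sat_L]
  rintro ⟨v, -, hv⟩
  exact hS v.1 v.2 hv

theorem sat_K_Kseq_L_Eseq_iff {a b : A} {X : List A} {Y : List (A × Bool)}
    (hX : ∀ c ∈ X, M.Omniscient c) (hY : ∀ e ∈ Y, M.Omniscient e.1) (φ : Form A P) (w : M.W) :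
    sat M w (.K a (Kseq X (Form.L b (Eseq Y φ)))) ↔ sat M w (.K a (Form.L b φ)) := by
  simp only [sat_K, sat_Kseq_iff_of_omniscient hX, sat_L, sat_Eseq_iff_of_omniscient hY]

end Semantics

section Countermodel

open Classical

variable {A : Type}

/-- Agent `a` confuses worlds `1, 2`, agent `b` confuses `0, 1` (unless `b = a`), every other
agent is omniscient; each agent's relation is the kernel of its view of the world. -/
noncomputable def threeWorldsView (a b c : A) (x : Fin 3) : Fin 3 :=
  if c = a then min x 1 else if c = b then max x 1 else x

noncomputable def threeWorlds (P : Type) (a b : A) : Model A P where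
  W := Fin 3
  R c x y := threeWorldsView a b c x = threeWorldsView a b c y
  equiv _ := InvImage.equivalence _ _ eq_equivalence
  V _ x := x = 1

variable {P : Type} {a b : A}

theorem threeWorlds_omniscient {c : A} (ha : c ≠ a) (hb : c ≠ b) :
    (threeWorlds P a b).Omniscient c := by
  intro u v huv
  simpa [threeWorlds, threeWorldsView, ha, hb] using huv

theorem sat_threeWorlds_K_L_atom_iff (hab : a ≠ b) (p : P) (w : Fin 3) :
    sat (threeWorlds P a b) w (.K a (Form.L b (.atom p))) ↔ w = 0 := by
  simp only [sat_L, sat, threeWorlds, threeWorldsView, if_pos, if_neg hab.symm]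
  revert w
  decide

end Countermodel

theorem List.ne_and_forall_ne_of_nodup_cons_append_cons {α : Type*} {a b : α} {l₁ l₂ : List α}
    (h : (a :: (l₁ ++ b :: l₂)).Nodup) : a ≠ b ∧ ∀ c ∈ l₁ ++ l₂, c ≠ a ∧ c ≠ b := by
  rw [List.nodup_cons, List.perm_middle.nodup_iff, List.nodup_cons] at h
  obtain ⟨ha, hb, -⟩ := h
  refine ⟨fun hab => ha (hab ▸ List.mem_append_right _ List.mem_cons_self), fun c hc => ?_⟩
  have hc' : c ∈ l₁ ++ b :: l₂ := List.mem_append.2 ((List.mem_append.1 hc).imp id (.tail _))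
  exact ⟨fun hca => ha (hca ▸ hc'), fun hcb => hb (hcb ▸ hc)⟩

/-- Every KL-simple single term formula `K_a X L_b Y p` (X a sequence of K operators,
Y a sequence of K and L operators, all agents pairwise distinct, `p` an atom)
is unsuccessful in S5. -/
theorem KL_simple_single_term_unsuccessful {A P : Type} (a b : A)
    (X : List A) (Y : List (A × Bool)) (p : P)
    (hnd : (a :: (X ++ b :: Y.map Prod.fst)).Nodup) :
    ¬ successful (Form.K a (Kseq X (Form.L b (Eseq Y (.atom p))))) := by
  obtain ⟨hab, hfresh⟩ := List.ne_and_forall_ne_of_nodup_cons_append_cons hnd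
  set M := threeWorlds P a b
  have hX : ∀ c ∈ X, M.Omniscient c := fun c hc =>
    have h := hfresh c (List.mem_append_left _ hc)
    threeWorlds_omniscient h.1 h.2
  have hY : ∀ e ∈ Y, M.Omniscient e.1 := fun e he =>
    have h := hfresh e.1 (List.mem_append_right _ (List.mem_map_of_mem he))
    threeWorlds_omniscient h.1 h.2
  set φ : Form A P := Form.K a (Kseq X (Form.L b (Eseq Y (.atom p))))
  have hφ : ∀ w : Fin 3, sat M w φ ↔ w = 0 := fun w =>
    (sat_K_Kseq_L_Eseq_iff hX hY _ w).trans (sat_threeWorlds_K_L_atom_iff hab p w)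
  intro hsucc
  have h0 := (hφ 0).2 rfl
  have hN := (sat_K_Kseq_L_Eseq_iff (fun c hc => (hX c hc).restrict _)
    (fun e he => (hY e he).restrict _) _ _).1 (hsucc M (0 : Fin 3) h0)
  refine not_sat_L_atom_restrict (fun v hv hp => ?_) _ (sat_of_sat_K hN)
  exact absurd (hp ▸ (hφ v).1 hv : (1 : Fin 3) = 0) (by decide)
end

section
/- The formula L_1 K_2 K_3 L_1 α is successful in S5: if M, w ⊨ L_1 K_2 K_3 L_1 α then all worlds reached in the witnessing construction also satisfy the formula, so it survives its own announcement. -/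
lemma prop_sat {A P : Type} (φ : Form A P) (h : φ.isProp) (M : Model A P)
    (S : M.W → Prop) (u : (M.restrict S).W) :
    sat (M.restrict S) u φ ↔ sat M u.1 φ := by
  induction φ with
  | atom p => exact Iff.rfl
  | neg φ ih => exact not_congr (ih h)
  | and φ ψ ihφ ihψ => exact and_congr (ihφ h.1) (ihψ h.2)
  | or φ ψ ihφ ihψ => exact or_congr (ihφ h.1) (ihψ h.2)
  | K => exact h.elim
  | ann => exact h.elim

/-- The formula `L_1 K_2 K_3 L_1 α` (pairwise distinct agents, α propositional)
is successful in S5. -/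
theorem L1K2K3L1_successful {A P : Type} (a b c : A)
    (hab : a ≠ b) (hac : a ≠ c) (hbc : b ≠ c)
    (α : Form A P) (hα : α.isProp) :
    successful (Form.L a (.K b (.K c (Form.L a α)))) := by
  intro M w hw
  set S : M.W → Prop := fun u => sat M u (Form.L a (.K b (.K c (Form.L a α)))) with hS
  have hw2 : ∃ v, M.R a w v ∧ sat M v (.K b (.K c (Form.L a α))) := by
    by_contra h
    push_neg at h
    exact hw h
  obtain ⟨v, hav, hv⟩ := hw2
  have hvS : S v := fun h => h v ((M.equiv a).refl v) hv
  intro h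
  apply h ⟨v, hvS⟩ hav
  rintro ⟨x, hxS⟩ hbx ⟨y, hyS⟩ hcy
  intro hz
  apply hyS
  intro vy havy hvy
  have hLy : sat M vy (Form.L a α) := hvy vy ((M.equiv b).refl vy) vy ((M.equiv c).refl vy)
  apply hLy
  intro u hau huα
  have huS : S u := fun h' => h' vy ((M.equiv a).symm hau) hvy
  exact hz ⟨u, huS⟩ ((M.equiv a).trans havy hau) ((prop_sat α hα M S ⟨u, huS⟩).mpr huα)
end

section
/- The class of successful formulas is not closed under prefixing with a possibility operator in the multi-agent case: L_1 K_a K_b L_1 p is successful in S5, but L_2 L_1 K_a K_b L_1 p is unsuccessful. -/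
/-!
The truth set of `L_a φ` is a union of `a`-cells. Announcing `L_a (K_b ⋯ K_c L_a χ)`, with `χ`
propositional, therefore keeps the whole `a`-cell of every surviving world, so each surviving
world that satisfied `K_b ⋯ K_c L_a χ` still does, and the outer `L_a` keeps its witness.

The extra `L_2` breaks this: in the four-world counter-model `θ = L_2 L_1 K_a K_b L_1 p` holds
at worlds `0` and `1` only, and its announcement deletes world `2`, the only `1`-witness for `p`
at world `1`. Then `K_b L_1 p`, hence `K_a K_b L_1 p`, fails everywhere, and so does `θ`.
-/

variable {A P : Type}

theorem sat_L_iff {M : Model A P} {w : M.W} {a : A} {φ : Form A P} :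
    sat M w (Form.L a φ) ↔ ∃ v, M.R a w v ∧ sat M v φ := by
  simp [Form.L, sat]

theorem sat_L_of_R {M : Model A P} {u v : M.W} {a : A} {φ : Form A P}
    (huv : M.R a u v) (hu : sat M u (Form.L a φ)) : sat M v (Form.L a φ) := by
  obtain ⟨s, hus, hs⟩ := sat_L_iff.1 hu
  exact sat_L_iff.2 ⟨s, (M.equiv a).trans ((M.equiv a).symm huv) hus, hs⟩

theorem sat_restrict_iff_of_isProp {M : Model A P} {S : M.W → Prop} {φ : Form A P}
    (hφ : φ.isProp) (w : (M.restrict S).W) : sat (M.restrict S) w φ ↔ sat M w.1 φ := by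
  induction φ with
  | atom _ => rfl
  | neg φ ih => exact not_congr (ih hφ)
  | and φ ψ ihφ ihψ => exact and_congr (ihφ hφ.1) (ihψ hφ.2)
  | or φ ψ ihφ ihψ => exact or_congr (ihφ hφ.1) (ihψ hφ.2)
  | K => exact hφ.elim
  | ann => exact hφ.elim

theorem sat_restrict_of_sat_Kseq_L {M : Model A P} {S : M.W → Prop} {a : A}
    {χ : Form A P} (hχ : χ.isProp) (hS : ∀ u v, S u → M.R a u v → S v)
    (l : List A) (w : (M.restrict S).W) (hw : sat M w.1 (Kseq l (Form.L a χ))) :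
    sat (M.restrict S) w (Kseq l (Form.L a χ)) := by
  induction l generalizing w with
  | nil =>
    obtain ⟨s, hws, hs⟩ := sat_L_iff.1 hw
    exact sat_L_iff.2 ⟨⟨s, hS _ _ w.2 hws⟩, hws, (sat_restrict_iff_of_isProp hχ _).2 hs⟩
  | cons _ l ih => exact fun v hwv => ih v (hw v.1 hwv)

theorem successful_L_Kseq_L (a : A) (l : List A) {χ : Form A P} (hχ : χ.isProp) :
    successful (Form.L a (Kseq l (Form.L a χ))) := by
  intro M w hw
  obtain ⟨v, hwv, hv⟩ := sat_L_iff.1 hw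
  exact sat_L_iff.2 ⟨⟨v, sat_L_of_R hwv hw⟩, hwv,
    sat_restrict_of_sat_Kseq_L hχ (fun _ _ hu huv => sat_L_of_R huv hu) l _ hv⟩

theorem sat_restrict_congr {M : Model A P} {S S' : M.W → Prop} (h : ∀ w, S w ↔ S' w)
    {w : M.W} (hw : S w) (φ : Form A P) :
    sat (M.restrict S) ⟨w, hw⟩ φ ↔ sat (M.restrict S') ⟨w, (h w).1 hw⟩ φ := by
  obtain rfl : S = S' := funext fun w => propext (h w)
  rfl

abbrev Model.ofCells {W ι : Type} (cell : A → W → ι) (V : P → W → Prop) : Model A P where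
  W := W
  R a u v := cell a u = cell a v
  equiv _ := ⟨fun _ => rfl, Eq.symm, Eq.trans⟩
  V := V

/-- Agents `1, 2, a, b` are `0, 1, 2, 3`; `cell i u` is the least world that agent `i` cannot
distinguish from `u`. -/
def cell : Fin 4 → Fin 4 → Fin 4
  | 0, 0 => 0 | 0, 1 => 1 | 0, 2 => 1 | 0, 3 => 3
  | 1, 0 => 0 | 1, 1 => 0 | 1, 2 => 2 | 1, 3 => 3
  | 2, 0 => 0 | 2, 1 => 1 | 2, 2 => 1 | 2, 3 => 1
  | 3, 0 => 0 | 3, 1 => 0 | 3, 2 => 2 | 3, 3 => 3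

abbrev counterModel : Model (Fin 4) Unit := Model.ofCells cell fun _ u => u = 0 ∨ u = 2

local notation "ψ" => Form.K (2 : Fin 4) (Form.K 3 (Form.L 0 (Form.atom ())))
local notation "θ" => Form.L (1 : Fin 4) (Form.L 0 ψ)

theorem sat_counterModel_ψ_iff (u : Fin 4) : sat counterModel u ψ ↔ u = 0 := by
  revert u
  simp only [sat, sat_L_iff]
  decide

theorem sat_counterModel_θ_iff (u : Fin 4) : sat counterModel u θ ↔ u = 0 ∨ u = 1 := by
  revert u
  simp only [sat_L_iff, sat_counterModel_ψ_iff]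
  decide

theorem not_sat_restrict_counterModel_ψ (u : {u : Fin 4 // u = 0 ∨ u = 1}) :
    ¬ sat (counterModel.restrict fun u => u = 0 ∨ u = 1) u ψ := by
  revert u
  simp only [sat, sat_L_iff, Model.restrict]
  decide

theorem not_successful_θ : ¬ successful θ := fun h => by
  have := h counterModel (0 : Fin 4) ((sat_counterModel_θ_iff 0).2 (Or.inl rfl))
  obtain ⟨v, -, hv⟩ := sat_L_iff.1 ((sat_restrict_congr sat_counterModel_θ_iff _ _).1 this)
  obtain ⟨u, -, hu⟩ := sat_L_iff.1 hv
  exact not_sat_restrict_counterModel_ψ u hu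

/-- Successful formulas are not closed under prefixing with a possibility operator:
`L_1 K_a K_b L_1 p` is successful but `L_2 L_1 K_a K_b L_1 p` is not.
(Agents: `1 = 0`, `2 = 1`, `a = 2`, `b = 3` in `Fin 4`.) -/
theorem successful_not_closed_under_L :
    successful (Form.L (0 : Fin 4) (.K 2 (.K 3 (Form.L 0 (.atom ()))))) ∧
    ¬ successful (Form.L (1 : Fin 4)
        (Form.L 0 (.K 2 (.K 3 (Form.L 0 (.atom ())))))) :=
  ⟨successful_L_Kseq_L 0 [2, 3] trivial, not_successful_θ⟩
end
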